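/- arXiv:2603.10530 — 3 statements merged into one kernel-verified Lean document; each statement's English description precedes it below -/
import Mathlib

section
/- Let U, V, W be real n×n matrices with U and W symmetric, so that H = [[U, V],[Vᵀ, W]] is a real symmetric 2n×2n matrix. Define the complex n×n matrices A = (U + W + √−1(V − Vᵀ))/4 and B = (U − W − √−1(V + Vᵀ))/4 (so A is Hermitian and B is symmetric). Then H is positive definite if and only if A is positive definite and A − B·(Ā)⁻¹·B̄ is positive definite, where Ā and B̄ denote entrywise complex conjugates. -/
open Complex Matrix
open scoped ComplexOrder

noncomputable section

/-- Wirtinger derivative `∂/∂z_j` of a complex-valued function on `ℂⁿ`. -/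
def wdz {n : ℕ} (f : (Fin n → ℂ) → ℂ) (j : Fin n) (z : Fin n → ℂ) : ℂ :=
  (fderiv ℝ f z (Pi.single j 1) - Complex.I * fderiv ℝ f z (Pi.single j Complex.I)) / 2

/-- Wirtinger derivative `∂/∂z̄_j` of a complex-valued function on `ℂⁿ`. -/
def wdzbar {n : ℕ} (f : (Fin n → ℂ) → ℂ) (j : Fin n) (z : Fin n → ℂ) : ℂ :=
  (fderiv ℝ f z (Pi.single j 1) + Complex.I * fderiv ℝ f z (Pi.single j Complex.I)) / 2

/-- A real-valued function on `ℂⁿ` viewed as complex-valued. -/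
def cplx {n : ℕ} (u : (Fin n → ℂ) → ℝ) : (Fin n → ℂ) → ℂ := fun z => (u z : ℂ)

/-- The complex Hessian `A = (u_{ij̄}) = (∂_i ∂_{j̄} u)`. -/
def hessA {n : ℕ} (u : (Fin n → ℂ) → ℝ) (z : Fin n → ℂ) : Matrix (Fin n) (Fin n) ℂ :=
  Matrix.of fun i j => wdz (wdzbar (cplx u) j) i z

/-- The matrix `B = (u_{ij}) = (∂_i ∂_j u)`. -/
def hessB {n : ℕ} (u : (Fin n → ℂ) → ℝ) (z : Fin n → ℂ) : Matrix (Fin n) (Fin n) ℂ :=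
  Matrix.of fun i j => wdz (wdz (cplx u) j) i z

/-- `u^{ij̄}`, the entries of the inverse of the complex Hessian, with the convention
`∑_j u^{ij̄} u_{kj̄} = δ_{ik}`. -/
def uInv {n : ℕ} (u : (Fin n → ℂ) → ℝ) (z : Fin n → ℂ) (i j : Fin n) : ℂ :=
  (hessA u z)⁻¹ j i

/-- Entrywise Wirtinger derivative `∂_i` of a matrix-valued function. -/
def mwdz {n : ℕ} (F : (Fin n → ℂ) → Matrix (Fin n) (Fin n) ℂ) (i : Fin n) (z : Fin n → ℂ) :
    Matrix (Fin n) (Fin n) ℂ :=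
  Matrix.of fun p q => wdz (fun w => F w p q) i z

/-- Entrywise Wirtinger derivative `∂_{j̄}` of a matrix-valued function. -/
def mwdzbar {n : ℕ} (F : (Fin n → ℂ) → Matrix (Fin n) (Fin n) ℂ) (j : Fin n) (z : Fin n → ℂ) :
    Matrix (Fin n) (Fin n) ℂ :=
  Matrix.of fun p q => wdzbar (fun w => F w p q) j z

/-- Entrywise complex conjugate of a matrix. -/
def mconj {n : ℕ} (M : Matrix (Fin n) (Fin n) ℂ) : Matrix (Fin n) (Fin n) ℂ :=
  M.map (starRingEnd ℂ)

/-- The real coordinate directions `x_1, …, x_n, y_1, …, y_n` of `ℂⁿ`. -/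
def realDir {n : ℕ} : (Fin n ⊕ Fin n) → (Fin n → ℂ)
  | Sum.inl j => Pi.single j 1
  | Sum.inr j => Pi.single j Complex.I

/-- The real Hessian of `u : ℂⁿ → ℝ` in the coordinates `(x_1,…,x_n,y_1,…,y_n)`. -/
def realHess {n : ℕ} (u : (Fin n → ℂ) → ℝ) (z : Fin n → ℂ) :
    Matrix (Fin n ⊕ Fin n) (Fin n ⊕ Fin n) ℝ :=
  Matrix.of fun a b => fderiv ℝ (fun w => fderiv ℝ u w (realDir b)) z (realDir a)

/-! Complexifying, the real quadratic form `H` is positive definite iff its Hermitian extension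
to `ℂ^{2n}` is. Rewritten in the coordinates `(z̄, z)`, where `z = x + iy`, this Hermitian form
has the block matrix `[[A, B], [B̄, Ā]]`; as `B` is symmetric, `B̄ = Bᴴ`, and the Schur complement
of the block `Ā` is `A - B Ā⁻¹ B̄`. Finally `Ā` is positive definite iff `A` is. -/

namespace Matrix

section Schur

variable {𝕜 m n : Type*} [RCLike 𝕜] [Fintype m] [Fintype n] [DecidableEq n]

theorem posDef_fromBlocks_iff_of_posDef₂₂ (A : Matrix m m 𝕜) (B : Matrix m n 𝕜)
    {D : Matrix n n 𝕜} (hD : D.PosDef) :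
    (fromBlocks A B Bᴴ D).PosDef ↔ (A - B * D⁻¹ * Bᴴ).PosDef := by
  classical
  have := hD.isUnit.invertible
  have hdet : (fromBlocks A B Bᴴ D).det = D.det * (A - B * D⁻¹ * Bᴴ).det := by
    rw [det_fromBlocks₂₂, invOf_eq_nonsing_inv]
  constructor
  · intro h
    rw [((hD.fromBlocks₂₂ A B).mp h.posSemidef).posDef_iff_det_ne_zero]
    exact right_ne_zero_of_mul (hdet ▸ h.det_pos.ne')
  · intro h
    rw [((hD.fromBlocks₂₂ A B).mpr h.posSemidef).posDef_iff_det_ne_zero, hdet]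
    exact mul_ne_zero hD.det_pos.ne' h.det_pos.ne'

theorem posDef_fromBlocks_iff₂₂ (A : Matrix m m 𝕜) (B : Matrix m n 𝕜) (D : Matrix n n 𝕜) :
    (fromBlocks A B Bᴴ D).PosDef ↔ D.PosDef ∧ (A - B * D⁻¹ * Bᴴ).PosDef := by
  refine ⟨fun h => ?_, fun ⟨hD, hS⟩ => (posDef_fromBlocks_iff_of_posDef₂₂ A B hD).mpr hS⟩
  have hD : D.PosDef := h.submatrix Sum.inr_injective
  exact ⟨hD, (posDef_fromBlocks_iff_of_posDef₂₂ A B hD).mp h⟩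

end Schur

theorem posDef_map_starRingEnd_iff {𝕜 n : Type*} [RCLike 𝕜] {M : Matrix n n 𝕜} :
    (M.map (starRingEnd 𝕜)).PosDef ↔ M.PosDef :=
  (PosDef.transpose_iff (M := Mᴴ)).trans posDef_conjTranspose_iff

section Complexification

variable {ι : Type*} [Fintype ι]

theorem star_dotProduct_map_ofReal_mulVec {H : Matrix ι ι ℝ} (hH : H.IsSymm) (v : ι → ℂ) :
    star v ⬝ᵥ H.map (↑) *ᵥ v =
      (((fun i => (v i).re) ⬝ᵥ H *ᵥ fun i => (v i).re) +
        ((fun i => (v i).im) ⬝ᵥ H *ᵥ fun i => (v i).im) : ℝ) := by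
  have hcross : ∑ i, ∑ j, (v i).re * H i j * (v j).im =
      ∑ i, ∑ j, (v i).im * H i j * (v j).re := by
    rw [Finset.sum_comm]
    refine Finset.sum_congr rfl fun i _ => Finset.sum_congr rfl fun j _ => ?_
    rw [hH.apply i j]
    ring
  apply Complex.ext
  · simp [dotProduct, mulVec, Finset.mul_sum, ← Finset.sum_add_distrib]
  · simp only [dotProduct, Pi.star_apply, RCLike.star_def, mulVec, map_apply, Finset.mul_sum,
      im_sum, mul_im, conj_re, conj_im, ofReal_re, ofReal_im, mul_re, ofReal_add, ofReal_sum,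
      ofReal_mul, add_im, zero_mul, mul_zero, add_zero, sub_zero, neg_mul, Finset.sum_const_zero]
    simp only [Finset.sum_add_distrib, Finset.sum_neg_distrib, ← mul_assoc, hcross,
      add_neg_cancel]

theorem posDef_map_ofReal_iff {H : Matrix ι ι ℝ} (hH : H.IsSymm) :
    (H.map ((↑) : ℝ → ℂ)).PosDef ↔ H.PosDef := by
  constructor
  · intro h
    refine .of_dotProduct_mulVec_pos (isHermitian_iff_isSymm.mpr hH) fun x hx => ?_
    have hx' : (fun i => (x i : ℂ)) ≠ 0 := fun h0 =>
      hx (funext fun i => by simpa using congrFun h0 i)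
    simpa [star_dotProduct_map_ofReal_mulVec hH] using h.dotProduct_mulVec_pos hx'
  · intro h
    refine .of_dotProduct_mulVec_pos ?_ fun v hv => ?_
    · ext i j
      simp [hH.apply]
    have hre_or_im : (fun i => (v i).re) ≠ 0 ∨ (fun i => (v i).im) ≠ 0 := by
      by_contra! h0
      exact hv (funext fun i => Complex.ext (congrFun h0.1 i) (congrFun h0.2 i))
    have hpos {x : ι → ℝ} (hx : x ≠ 0) : 0 < x ⬝ᵥ H *ᵥ x := by
      simpa using h.dotProduct_mulVec_pos hx
    have hnonneg (x : ι → ℝ) : 0 ≤ x ⬝ᵥ H *ᵥ x := by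
      simpa using h.posSemidef.dotProduct_mulVec_nonneg x
    rw [star_dotProduct_map_ofReal_mulVec hH, Complex.zero_lt_real]
    rcases hre_or_im with hre | him
    · exact add_pos_of_pos_of_nonneg (hpos hre) (hnonneg _)
    · exact add_pos_of_nonneg_of_pos (hnonneg _) (hpos him)

end Complexification

section ComplexCoordinates

variable {ι : Type*} [Fintype ι] [DecidableEq ι]

/-- Sends `(z̄, z)` to `(Re z, Im z)`. -/
def complexCoordChange (ι : Type*) [DecidableEq ι] : Matrix (ι ⊕ ι) (ι ⊕ ι) ℂ :=
  fromBlocks ((2 : ℂ)⁻¹ • 1) ((2 : ℂ)⁻¹ • 1) ((I / 2) • 1) (-(I / 2) • 1)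

theorem isUnit_complexCoordChange : IsUnit (complexCoordChange ι) := by
  have hinv : complexCoordChange ι * fromBlocks 1 (-I • 1) 1 (I • 1) = 1 := by
    rw [complexCoordChange, fromBlocks_multiply, ← fromBlocks_one]
    congr 1 <;> ext i j <;> by_cases h : i = j <;> simp [h, one_apply]
    · norm_num
    · linear_combination -I_sq
  exact (isUnit_iff_isUnit_det _).mpr (isUnit_det_of_right_inverse hinv)

theorem complexCoordChange_conjTranspose_mul_fromBlocks_mul (U V W : Matrix ι ι ℝ) :
    let A : Matrix ι ι ℂ :=
      (4 : ℂ)⁻¹ • ((U + W).map (fun x => (x : ℂ)) + I • (V - Vᵀ).map (fun x => (x : ℂ)))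
    let B : Matrix ι ι ℂ :=
      (4 : ℂ)⁻¹ • ((U - W).map (fun x => (x : ℂ)) - I • (V + Vᵀ).map (fun x => (x : ℂ)))
    (complexCoordChange ι)ᴴ * (fromBlocks U V Vᵀ W).map (fun x => (x : ℂ)) *
        complexCoordChange ι =
      fromBlocks A B (B.map (starRingEnd ℂ)) (A.map (starRingEnd ℂ)) := by
  intro A B
  rw [complexCoordChange, fromBlocks_map, fromBlocks_conjTranspose, fromBlocks_multiply,
    fromBlocks_multiply]
  congr 1 <;> ext i j <;> simp [A, B, map_ofNat]
  · linear_combination (-(W i j : ℂ) / 4) * I_sq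
  · linear_combination ((W i j : ℂ) / 4) * I_sq
  · linear_combination ((W i j : ℂ) / 4) * I_sq
  · linear_combination (-(W i j : ℂ) / 4) * I_sq

end ComplexCoordinates

end Matrix

theorem real_blocks_posdef_iff_complex (n : ℕ) (U V W : Matrix (Fin n) (Fin n) ℝ)
    (hU : U.IsSymm) (hW : W.IsSymm) :
    let H : Matrix (Fin n ⊕ Fin n) (Fin n ⊕ Fin n) ℝ := Matrix.fromBlocks U V Vᵀ W
    let A : Matrix (Fin n) (Fin n) ℂ :=
      (4 : ℂ)⁻¹ • ((U + W).map (fun x => (x : ℂ)) + Complex.I • (V - Vᵀ).map (fun x => (x : ℂ)))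
    let B : Matrix (Fin n) (Fin n) ℂ :=
      (4 : ℂ)⁻¹ • ((U - W).map (fun x => (x : ℂ)) - Complex.I • (V + Vᵀ).map (fun x => (x : ℂ)))
    (H.PosDef ↔ A.PosDef ∧ (A - B * (mconj A)⁻¹ * mconj B).PosDef) := by
  intro H A B
  have hH : H.IsSymm := hU.fromBlocks rfl hW
  have hB : B.IsSymm :=
    (((hU.sub hW).map _).sub (((isSymm_add_transpose_self V).map _).smul I)).smul _
  have hBconj : mconj B = Bᴴ := congrArg conjTranspose hB.eq
  have hblocks : (complexCoordChange (Fin n))ᴴ * H.map (↑) * complexCoordChange (Fin n) =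
      fromBlocks A B Bᴴ (mconj A) :=
    hBconj ▸ complexCoordChange_conjTranspose_mul_fromBlocks_mul U V W
  rw [← posDef_map_ofReal_iff hH, ← isUnit_complexCoordChange.posDef_star_left_conjugate_iff,
    star_eq_conjTranspose, hblocks, posDef_fromBlocks_iff₂₂, hBconj]
  exact and_congr_left' posDef_map_starRingEnd_iff

end
end

section
/- Let u be a C² function on ℂ^n, let H be its real Hessian at a point p in the coordinates (x_1,…,x_n,y_1,…,y_n), and let A = (u_{ij̄}(p)) and B = (u_{ij}(p)) be its complex Hessians at p. Then H is positive definite if and only if A is positive definite and A − B·(Ā)⁻¹·B̄ is positive definite. -/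
open Complex Matrix
open scoped ComplexOrder

noncomputable section

/-!
The Wirtinger operators `∂_j = (∂_{x_j} - i ∂_{y_j}) / 2` and `∂_{j̄} = (∂_{x_j} + i ∂_{y_j}) / 2`
form an invertible change of frame `T` of `ℂ^{2n}`, and conjugating the complexified real Hessian
by it gives `T H Tᴴ = [[A, B], [B̄, Ā]]`. Congruence preserves positive definiteness, and a real
symmetric matrix is positive definite iff its complexification is. By the symmetry of second
derivatives `B` is symmetric, so `B̄ = Bᴴ`, and the block matrix is positive definite iff `A` and
the Schur complement `A - B Ā⁻¹ B̄` of `Ā` are.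
-/

namespace Matrix

variable {m : Type*}

theorem re_star_dotProduct_map_ofReal_mulVec [Fintype m] (R : Matrix m m ℝ) (x : m → ℂ) :
    (star x ⬝ᵥ R.map ofReal *ᵥ x).re =
      (fun i ↦ (x i).re) ⬝ᵥ R *ᵥ (fun i ↦ (x i).re) +
        (fun i ↦ (x i).im) ⬝ᵥ R *ᵥ (fun i ↦ (x i).im) := by
  simp only [dotProduct, mulVec, Finset.mul_sum, ← Finset.sum_add_distrib, re_sum]
  refine Finset.sum_congr rfl fun i _ ↦ Finset.sum_congr rfl fun j _ ↦ ?_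
  simp

theorem posDef_map_ofReal_iff_s2 [Fintype m] {R : Matrix m m ℝ} :
    (R.map ofReal).PosDef ↔ R.PosDef := by
  have hconj : Function.Semiconj ofReal star star := fun r ↦ (conj_ofReal r).symm
  by_cases hR : R.IsHermitian
  swap
  · exact iff_of_false (fun h ↦ hR ((isHermitian_map_iff hconj ofReal_injective).1 h.1))
      (fun h ↦ hR h.1)
  have hRc := hR.map ofReal hconj
  rw [posDef_iff_dotProduct_mulVec, posDef_iff_dotProduct_mulVec]
  simp only [hR, hRc, true_and, star_trivial, Complex.lt_def, re_star_dotProduct_map_ofReal_mulVec]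
  constructor
  · intro h y hy
    simpa using (h (x := fun i ↦ (y i : ℂ)) (by simpa [funext_iff] using hy)).1
  · intro h x hx
    refine ⟨?_, (hRc.im_star_dotProduct_mulVec_self x).symm⟩
    rw [zero_re]
    have hnonneg (y : m → ℝ) : 0 ≤ y ⬝ᵥ R *ᵥ y := by
      rcases eq_or_ne y 0 with rfl | hy
      · simp
      · exact (h hy).le
    have hre_or_im : (fun i ↦ (x i).re) ≠ 0 ∨ (fun i ↦ (x i).im) ≠ 0 := by
      contrapose! hx
      ext i
      exact Complex.ext (congrFun hx.1 i) (congrFun hx.2 i)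
    rcases hre_or_im with hre | him
    · linarith [h hre, hnonneg fun i ↦ (x i).im]
    · linarith [h him, hnonneg fun i ↦ (x i).re]

theorem PosDef.map_conj [Fintype m] {A : Matrix m m ℂ} (hA : A.PosDef) :
    (A.map (starRingEnd ℂ)).PosDef :=
  hA.conjTranspose.transpose

theorem posDef_fromBlocks₂₂_iff {n 𝕜 : Type*} [Fintype m] [Fintype n] [DecidableEq m]
    [DecidableEq n] [RCLike 𝕜] {A : Matrix m m 𝕜} {B : Matrix m n 𝕜} {D : Matrix n n 𝕜}
    (hD : D.PosDef) : (fromBlocks A B Bᴴ D).PosDef ↔ (A - B * D⁻¹ * Bᴴ).PosDef := by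
  have := hD.isUnit.invertible
  have hdet : (fromBlocks A B Bᴴ D).det = D.det * (A - B * D⁻¹ * Bᴴ).det := by
    rw [det_fromBlocks₂₂, invOf_eq_nonsing_inv]
  constructor
  · intro h
    refine ((PosDef.fromBlocks₂₂ A B hD).1 h.posSemidef).posDef_iff_det_ne_zero.2 ?_
    exact right_ne_zero_of_mul (hdet ▸ h.det_pos.ne')
  · intro h
    refine ((PosDef.fromBlocks₂₂ A B hD).2 h.posSemidef).posDef_iff_det_ne_zero.2 ?_
    exact hdet ▸ mul_ne_zero hD.det_pos.ne' h.det_pos.ne'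

theorem posDef_fromBlocks_map_conj_iff [Fintype m] [DecidableEq m] {A B : Matrix m m ℂ}
    (hB : B.IsSymm) :
    (fromBlocks A B (B.map (starRingEnd ℂ)) (A.map (starRingEnd ℂ))).PosDef ↔
      A.PosDef ∧ (A - B * (A.map (starRingEnd ℂ))⁻¹ * B.map (starRingEnd ℂ)).PosDef := by
  have hBH : B.map (starRingEnd ℂ) = Bᴴ := by rw [conjTranspose, hB.eq]; rfl
  rw [hBH]
  constructor
  · intro h
    have hA : A.PosDef := h.submatrix Sum.inl_injective
    exact ⟨hA, (posDef_fromBlocks₂₂_iff hA.map_conj).1 h⟩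
  · rintro ⟨hA, hS⟩
    exact (posDef_fromBlocks₂₂_iff hA.map_conj).2 hS

/-- Its rows are the Wirtinger operators `∂_j` and `∂_{j̄}` written in the real frame `(x, y)`. -/
def wirtingerFrame (m : Type*) [DecidableEq m] : Matrix (m ⊕ m) (m ⊕ m) ℂ :=
  (2 : ℂ)⁻¹ • fromBlocks 1 (-I • 1) 1 (I • 1)

/-- For the real Hessian `R` in the coordinates `(x, y)`, `wirtingerA R = (∂_i ∂_{j̄})` and
`wirtingerB R = (∂_i ∂_j)`. -/
def wirtingerA (R : Matrix (m ⊕ m) (m ⊕ m) ℝ) : Matrix m m ℂ :=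
  of fun i j ↦ (R (.inl i) (.inl j) + R (.inr i) (.inr j)
    + I * (R (.inl i) (.inr j) - R (.inr i) (.inl j))) / 4

def wirtingerB (R : Matrix (m ⊕ m) (m ⊕ m) ℝ) : Matrix m m ℂ :=
  of fun i j ↦ (R (.inl i) (.inl j) - R (.inr i) (.inr j)
    - I * (R (.inl i) (.inr j) + R (.inr i) (.inl j))) / 4

theorem isSymm_wirtingerB {R : Matrix (m ⊕ m) (m ⊕ m) ℝ} (hR : R.IsSymm) :
    (wirtingerB R).IsSymm :=
  IsSymm.ext fun i j ↦ by
    rw [wirtingerB, of_apply, of_apply, hR.apply (.inl i), hR.apply (.inr i), hR.apply (.inr i),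
      hR.apply (.inl i)]
    ring

variable [Fintype m] [DecidableEq m]

theorem isUnit_wirtingerFrame : IsUnit (wirtingerFrame m) := by
  have h : wirtingerFrame m * ((2 : ℂ) • (wirtingerFrame m)ᴴ) = 1 := by
    ext (i | i) (j | j) <;> rcases eq_or_ne i j with rfl | h <;>
      simp [wirtingerFrame, mul_apply, fromBlocks, one_apply, mul_assoc, *, Ne.symm] <;> norm_num
  have := invertibleOfRightInverse _ _ h
  exact isUnit_of_invertible _

theorem wirtingerFrame_mul_map_ofReal_mul_conjTranspose (R : Matrix (m ⊕ m) (m ⊕ m) ℝ) :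
    wirtingerFrame m * R.map ofReal * (wirtingerFrame m)ᴴ =
      fromBlocks (wirtingerA R) (wirtingerB R) ((wirtingerB R).map (starRingEnd ℂ))
        ((wirtingerA R).map (starRingEnd ℂ)) := by
  ext (i | i) (j | j) <;>
    simp [wirtingerFrame, wirtingerA, wirtingerB, mul_apply, fromBlocks, one_apply,
      Fintype.sum_sum_type, apply_ite (starRingEnd ℂ), mul_ite, ite_mul, Finset.sum_ite_eq,
      map_ofNat] <;>
    ring_nf <;> simp only [I_sq] <;> ring

end Matrix

section Wirtinger

variable {n : ℕ}

theorem fderiv_cplx_apply {g : (Fin n → ℂ) → ℝ} {z : Fin n → ℂ} (hg : DifferentiableAt ℝ g z)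
    (v : Fin n → ℂ) : fderiv ℝ (cplx g) z v = fderiv ℝ g z v :=
  congrArg (· v) (ofRealCLM.hasFDerivAt.comp z hg.hasFDerivAt).fderiv

theorem fderiv_add_mul_div_two_apply {E : Type*} [NormedAddCommGroup E] [NormedSpace ℝ E]
    {f g : E → ℂ} {z : E} (hf : DifferentiableAt ℝ f z) (hg : DifferentiableAt ℝ g z) (c : ℂ)
    (v : E) :
    fderiv ℝ (fun w ↦ (f w + c * g w) / 2) z v = (fderiv ℝ f z v + c * fderiv ℝ g z v) / 2 := by
  simp_rw [div_eq_inv_mul]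
  rw [((hf.hasFDerivAt.fun_add (hg.hasFDerivAt.const_mul c)).const_mul (2 : ℂ)⁻¹).fderiv]
  simp [mul_add]

theorem wdz_add_mul_div_two {f g : (Fin n → ℂ) → ℂ} {z : Fin n → ℂ}
    (hf : DifferentiableAt ℝ f z) (hg : DifferentiableAt ℝ g z) (c : ℂ) (i : Fin n) :
    wdz (fun w ↦ (f w + c * g w) / 2) i z = (wdz f i z + c * wdz g i z) / 2 := by
  simp only [wdz, fderiv_add_mul_div_two_apply hf hg]
  ring

theorem wdz_cplx {g : (Fin n → ℂ) → ℝ} {z : Fin n → ℂ} (hg : DifferentiableAt ℝ g z)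
    (i : Fin n) :
    wdz (cplx g) i z =
      (fderiv ℝ g z (realDir (.inl i)) - I * fderiv ℝ g z (realDir (.inr i))) / 2 := by
  rw [wdz, fderiv_cplx_apply hg, fderiv_cplx_apply hg]
  rfl

theorem wdzbar_cplx {g : (Fin n → ℂ) → ℝ} {z : Fin n → ℂ} (hg : DifferentiableAt ℝ g z)
    (i : Fin n) :
    wdzbar (cplx g) i z =
      (fderiv ℝ g z (realDir (.inl i)) + I * fderiv ℝ g z (realDir (.inr i))) / 2 := by
  rw [wdzbar, fderiv_cplx_apply hg, fderiv_cplx_apply hg]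
  rfl

variable {u : (Fin n → ℂ) → ℝ}

theorem ContDiff.differentiable_fderiv_apply (hu : ContDiff ℝ 2 u) (v : Fin n → ℂ) :
    Differentiable ℝ (fun w ↦ fderiv ℝ u w v) :=
  ((hu.fderiv_right (m := 1) le_rfl).differentiable one_ne_zero).clm_apply
    (differentiable_const v)

theorem realHess_apply (hu : ContDiff ℝ 2 u) (p : Fin n → ℂ) (a b : Fin n ⊕ Fin n) :
    realHess u p a b = fderiv ℝ (fderiv ℝ u) p (realDir a) (realDir b) := by
  have hD := (hu.fderiv_right (m := 1) le_rfl).differentiable one_ne_zero p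
  rw [realHess, of_apply, fderiv_clm_apply hD (differentiableAt_const _)]
  simp

theorem isSymm_realHess (hu : ContDiff ℝ 2 u) (p : Fin n → ℂ) : (realHess u p).IsSymm :=
  IsSymm.ext fun a b ↦ by
    rw [realHess_apply hu, realHess_apply hu]
    exact (hu.contDiffAt.isSymmSndFDerivAt (by simp)).eq _ _

theorem wdz_half_add_mul_partials (hu : ContDiff ℝ 2 u) (p : Fin n → ℂ) (c : ℂ) (i j : Fin n) :
    wdz (fun w ↦ (cplx (fun w ↦ fderiv ℝ u w (realDir (.inl j))) w
        + c * cplx (fun w ↦ fderiv ℝ u w (realDir (.inr j))) w) / 2) i p =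
      (realHess u p (.inl i) (.inl j) - I * realHess u p (.inr i) (.inl j)
        + c * (realHess u p (.inl i) (.inr j) - I * realHess u p (.inr i) (.inr j))) / 4 := by
  have hdiff (b : Fin n ⊕ Fin n) :
      DifferentiableAt ℝ (cplx fun w ↦ fderiv ℝ u w (realDir b)) p :=
    ofRealCLM.differentiableAt.comp p (hu.differentiable_fderiv_apply _ p)
  rw [wdz_add_mul_div_two (hdiff _) (hdiff _), wdz_cplx (hu.differentiable_fderiv_apply _ p),
    wdz_cplx (hu.differentiable_fderiv_apply _ p)]
  simp only [realHess, of_apply]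
  ring

theorem hessA_eq_wirtingerA (hu : ContDiff ℝ 2 u) (p : Fin n → ℂ) :
    hessA u p = Matrix.wirtingerA (realHess u p) := by
  ext i j
  have hdzbar : wdzbar (cplx u) j = fun w ↦ (cplx (fun w ↦ fderiv ℝ u w (realDir (.inl j))) w
      + I * cplx (fun w ↦ fderiv ℝ u w (realDir (.inr j))) w) / 2 :=
    funext fun w ↦ wdzbar_cplx (hu.differentiable two_ne_zero w) j
  rw [hessA, of_apply, hdzbar, wdz_half_add_mul_partials hu, Matrix.wirtingerA, of_apply]
  ring_nf
  simp only [I_sq]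
  ring

theorem hessB_eq_wirtingerB (hu : ContDiff ℝ 2 u) (p : Fin n → ℂ) :
    hessB u p = Matrix.wirtingerB (realHess u p) := by
  ext i j
  have hdz : wdz (cplx u) j = fun w ↦ (cplx (fun w ↦ fderiv ℝ u w (realDir (.inl j))) w
      + -I * cplx (fun w ↦ fderiv ℝ u w (realDir (.inr j))) w) / 2 :=
    funext fun w ↦ by rw [wdz_cplx (hu.differentiable two_ne_zero w) j, cplx, cplx]; ring
  rw [hessB, of_apply, hdz, wdz_half_add_mul_partials hu, Matrix.wirtingerB, of_apply]
  ring_nf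
  simp only [I_sq]
  ring

end Wirtinger

theorem real_hessian_posdef_iff_complex (n : ℕ) (u : (Fin n → ℂ) → ℝ)
    (hu : ContDiff ℝ 2 u) (p : Fin n → ℂ) :
    (realHess u p).PosDef ↔ (hessA u p).PosDef ∧
      (hessA u p - hessB u p * (mconj (hessA u p))⁻¹ * mconj (hessB u p)).PosDef := by
  rw [hessA_eq_wirtingerA hu, hessB_eq_wirtingerB hu, ← posDef_map_ofReal_iff_s2,
    ← isUnit_wirtingerFrame.posDef_star_right_conjugate_iff, star_eq_conjTranspose,
    wirtingerFrame_mul_map_ofReal_mul_conjTranspose]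
  exact posDef_fromBlocks_map_conj_iff (isSymm_wirtingerB (isSymm_realHess hu p))

end
end

section
/- Let u be a smooth strictly plurisubharmonic function on an open set Ω ⊆ ℂ^n satisfying det(u_{ij̄}) = e^{(n+1)u} on Ω, and set A = (u_{ij̄}), B = (u_{ij}). Then, as an identity of n×n matrix-valued functions on Ω, u^{ij̄} ∂_i∂_{j̄} A = u^{ij̄} (∂_{j̄} B)·(Ā)⁻¹·(∂_i B̄) + (n+1)A (summation over i, j). -/
open Complex Matrix
open scoped ComplexOrder

noncomputable section

/-!
Differentiating `log det A = (n + 1) u` in `∂_p` gives `tr (A⁻¹ ∂_p A) = (n + 1) u_p`; applying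
`∂̄_q` and using `∂̄_q A⁻¹ = -A⁻¹ (∂̄_q A) A⁻¹` gives
`tr (A⁻¹ ∂_p ∂̄_q A) = (n + 1) u_{pq̄} + tr (A⁻¹ (∂_p A) A⁻¹ (∂̄_q A))`.
As partial derivatives commute, `∂_i ∂̄_j u_{pq̄} = ∂_p ∂̄_q u_{ij̄}`, `∂̄_j u_{pr} = ∂_p u_{rj̄}`
and `Ā = Aᵀ`, so these two traces are the `(p, q)` entries of the two sums in the theorem.
-/

open scoped ContDiff

section WirtingerDeriv

variable {E : Type*} [NormedAddCommGroup E] [NormedSpace ℂ E]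

/-- `(∂_v + c ∂_{I • v}) / 2`: for `c = -I` this is the Wirtinger derivative `∂` in the direction
`v`, for `c = I` its conjugate `∂̄`. -/
def wirtingerDeriv (c : ℂ) (v : E) (f : E → ℂ) (x : E) : ℂ :=
  (fderiv ℝ f x v + c * fderiv ℝ f x (I • v)) / 2

variable {c c₁ c₂ c₃ c₄ : ℂ} {v v₁ v₂ v₃ v₄ : E} {f g : E → ℂ} {x : E} {Ω : Set E}

theorem Filter.EventuallyEq.wirtingerDeriv_eq (h : f =ᶠ[nhds x] g) :
    wirtingerDeriv c v f x = wirtingerDeriv c v g x := by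
  simp only [wirtingerDeriv, h.fderiv_eq]

theorem Set.EqOn.wirtingerDeriv (hΩ : IsOpen Ω) (h : Set.EqOn f g Ω) :
    Set.EqOn (wirtingerDeriv c v f) (wirtingerDeriv c v g) Ω := fun _ hx =>
  (Filter.eventuallyEq_of_mem (hΩ.mem_nhds hx) h).wirtingerDeriv_eq

theorem wirtingerDeriv_const (a : ℂ) : wirtingerDeriv c v (fun _ => a) x = 0 := by
  simp [wirtingerDeriv]

theorem wirtingerDeriv_const_mul (a : ℂ) :
    wirtingerDeriv c v (fun y => a * f y) x = a * wirtingerDeriv c v f x := by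
  rw [wirtingerDeriv, wirtingerDeriv, show (fun y => a * f y) = a • f from rfl,
    fderiv_const_smul_field]
  simp only [FunLike.coe_smul, Pi.smul_apply, smul_eq_mul]
  ring

theorem wirtingerDeriv_mul (hf : DifferentiableAt ℝ f x) (hg : DifferentiableAt ℝ g x) :
    wirtingerDeriv c v (fun y => f y * g y) x
      = wirtingerDeriv c v f x * g x + f x * wirtingerDeriv c v g x := by
  simp only [wirtingerDeriv, fderiv_fun_mul hf hg, FunLike.coe_add,
    FunLike.coe_smul, Pi.add_apply, Pi.smul_apply, smul_eq_mul]
  ring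

theorem wirtingerDeriv_sum {ι : Type*} {s : Finset ι} {F : ι → E → ℂ}
    (hF : ∀ i ∈ s, DifferentiableAt ℝ (F i) x) :
    wirtingerDeriv c v (fun y => ∑ i ∈ s, F i y) x = ∑ i ∈ s, wirtingerDeriv c v (F i) x := by
  simp only [wirtingerDeriv, fderiv_fun_sum hF, FunLike.coe_sum, Finset.sum_apply,
    Finset.mul_sum, ← Finset.sum_add_distrib, Finset.sum_div]

theorem wirtingerDeriv_prod {ι : Type*} [DecidableEq ι] {s : Finset ι} {F : ι → E → ℂ}
    (hF : ∀ i ∈ s, DifferentiableAt ℝ (F i) x) :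
    wirtingerDeriv c v (fun y => ∏ i ∈ s, F i y) x
      = ∑ i ∈ s, wirtingerDeriv c v (F i) x * ∏ k ∈ s.erase i, F k x := by
  simp only [wirtingerDeriv, fderiv_finsetProd hF, FunLike.coe_sum,
    Finset.sum_apply, FunLike.coe_smul, Pi.smul_apply, smul_eq_mul, Finset.mul_sum,
    ← Finset.sum_add_distrib, Finset.sum_div]
  exact Finset.sum_congr rfl fun i _ => by ring

theorem wirtingerDeriv_cexp (hf : DifferentiableAt ℝ f x) :
    wirtingerDeriv c v (fun y => cexp (f y)) x = cexp (f x) * wirtingerDeriv c v f x := by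
  simp only [wirtingerDeriv, hf.hasFDerivAt.cexp.fderiv, FunLike.coe_smul,
    Pi.smul_apply, smul_eq_mul]
  ring

theorem conj_wirtingerDeriv :
    starRingEnd ℂ (wirtingerDeriv c v f x)
      = wirtingerDeriv (starRingEnd ℂ c) v (fun y => starRingEnd ℂ (f y)) x := by
  simp only [wirtingerDeriv, map_div₀, map_add, map_mul, map_ofNat]
  rw [show (fun y => starRingEnd ℂ (f y)) = fun y => star (f y) from rfl, fderiv_star]
  simp

theorem ContDiffOn.wirtingerDeriv (hΩ : IsOpen Ω) (hf : ContDiffOn ℝ ∞ f Ω) :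
    ContDiffOn ℝ ∞ (wirtingerDeriv c v f) Ω := by
  have h := hf.fderiv_of_isOpen hΩ (m := ∞) le_rfl
  exact ((h.clm_apply contDiffOn_const).add
    (contDiffOn_const.mul (h.clm_apply contDiffOn_const))).div_const 2

theorem fderiv_wirtingerDeriv_apply (hf : DifferentiableAt ℝ (fderiv ℝ f) x) (w : E) :
    fderiv ℝ (wirtingerDeriv c v f) x w
      = (fderiv ℝ (fderiv ℝ f) x w v + c * fderiv ℝ (fderiv ℝ f) x w (I • v)) / 2 := by
  let L : (E →L[ℝ] ℂ) →L[ℝ] ℂ := (2 : ℂ)⁻¹ •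
    (ContinuousLinearMap.apply ℝ ℂ v + c • ContinuousLinearMap.apply ℝ ℂ (I • v))
  have hL : wirtingerDeriv c v f = L ∘ fderiv ℝ f := by
    funext y
    simp only [wirtingerDeriv, smul_add, FunLike.coe_add, FunLike.coe_smul, Function.comp_apply,
      Pi.add_apply, Pi.smul_apply, ContinuousLinearMap.apply_apply, smul_eq_mul, L]
    ring
  rw [hL, (L.hasFDerivAt.comp x hf.hasFDerivAt).fderiv]
  simp only [smul_add, ContinuousLinearMap.add_comp, ContinuousLinearMap.smul_comp,
    _root_.add_apply, _root_.smul_apply, ContinuousLinearMap.comp_apply,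
    ContinuousLinearMap.apply_apply, smul_eq_mul, L]
  ring

theorem wirtingerDeriv_comm (hΩ : IsOpen Ω) (hf : ContDiffOn ℝ ∞ f Ω) :
    Set.EqOn (wirtingerDeriv c₁ v₁ (wirtingerDeriv c₂ v₂ f))
      (wirtingerDeriv c₂ v₂ (wirtingerDeriv c₁ v₁ f)) Ω := fun x hx => by
  have hfx : ContDiffAt ℝ ∞ f x := hf.contDiffAt (hΩ.mem_nhds hx)
  have h2 : DifferentiableAt ℝ (fderiv ℝ f) x :=
    (hfx.fderiv_right (m := ∞) (by simp)).differentiableAt (by simp)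
  have hsymm := hfx.isSymmSndFDerivAt (by
    rw [minSmoothness_of_isRCLikeNormedField]; exact WithTop.coe_le_coe.2 le_top)
  rw [wirtingerDeriv, wirtingerDeriv]
  simp only [fderiv_wirtingerDeriv_apply h2, hsymm v₁, hsymm (I • v₁)]
  ring

theorem wirtingerDeriv_comm_three (hΩ : IsOpen Ω) (hf : ContDiffOn ℝ ∞ f Ω) :
    Set.EqOn (wirtingerDeriv c₁ v₁ (wirtingerDeriv c₂ v₂ (wirtingerDeriv c₃ v₃ f)))
      (wirtingerDeriv c₂ v₂ (wirtingerDeriv c₃ v₃ (wirtingerDeriv c₁ v₁ f))) Ω :=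
  (wirtingerDeriv_comm hΩ (hf.wirtingerDeriv hΩ)).trans
    ((wirtingerDeriv_comm hΩ hf).wirtingerDeriv hΩ)

theorem wirtingerDeriv_comm_four (hΩ : IsOpen Ω) (hf : ContDiffOn ℝ ∞ f Ω) :
    Set.EqOn (wirtingerDeriv c₁ v₁ (wirtingerDeriv c₂ v₂ (wirtingerDeriv c₃ v₃
        (wirtingerDeriv c₄ v₄ f))))
      (wirtingerDeriv c₃ v₃ (wirtingerDeriv c₄ v₄ (wirtingerDeriv c₁ v₁
        (wirtingerDeriv c₂ v₂ f)))) Ω :=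
  ((wirtingerDeriv_comm_three hΩ hf).wirtingerDeriv hΩ).trans
    (wirtingerDeriv_comm_three hΩ (hf.wirtingerDeriv hΩ))

end WirtingerDeriv

section MatrixWirtingerDeriv

variable {E : Type*} [NormedAddCommGroup E] [NormedSpace ℂ E] {c : ℂ} {v x : E}

def matrixWirtingerDeriv {m k : Type*} (c : ℂ) (v : E) (M : E → Matrix m k ℂ) (x : E) :
    Matrix m k ℂ :=
  of fun i j => wirtingerDeriv c v (fun y => M y i j) x

theorem differentiableAt_mul_apply {l m k : Type*} [Fintype m] {M : E → Matrix l m ℂ}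
    {N : E → Matrix m k ℂ} (hM : ∀ i j, DifferentiableAt ℝ (fun y => M y i j) x)
    (hN : ∀ i j, DifferentiableAt ℝ (fun y => N y i j) x) (i : l) (j : k) :
    DifferentiableAt ℝ (fun y => (M y * N y) i j) x := by
  simp only [mul_apply]
  exact DifferentiableAt.fun_sum fun k _ => (hM i k).mul (hN k j)

theorem matrixWirtingerDeriv_mul {l m k : Type*} [Fintype m] {M : E → Matrix l m ℂ}
    {N : E → Matrix m k ℂ} (hM : ∀ i j, DifferentiableAt ℝ (fun y => M y i j) x)
    (hN : ∀ i j, DifferentiableAt ℝ (fun y => N y i j) x) :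
    matrixWirtingerDeriv c v (fun y => M y * N y) x
      = matrixWirtingerDeriv c v M x * N x + M x * matrixWirtingerDeriv c v N x := by
  ext i j
  simp only [matrixWirtingerDeriv, mul_apply, of_apply, Matrix.add_apply,
    ← Finset.sum_add_distrib]
  rw [wirtingerDeriv_sum (F := fun k y => M y i k * N y k j) fun k _ => (hM i k).mul (hN k j)]
  exact Finset.sum_congr rfl fun k _ => wirtingerDeriv_mul (hM i k) (hN k j)

variable {ι : Type*} [Fintype ι] {M : E → Matrix ι ι ℂ}

theorem wirtingerDeriv_trace (hM : ∀ i j, DifferentiableAt ℝ (fun y => M y i j) x) :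
    wirtingerDeriv c v (fun y => trace (M y)) x = trace (matrixWirtingerDeriv c v M x) :=
  wirtingerDeriv_sum fun i _ => hM i i

variable [DecidableEq ι]

theorem differentiableAt_det (hM : ∀ i j, DifferentiableAt ℝ (fun y => M y i j) x) :
    DifferentiableAt ℝ (fun y => (M y).det) x := by
  simp only [det_apply']
  fun_prop

theorem det_updateCol_eq_sum_prod {R : Type*} [CommRing R] (A : Matrix ι ι R) (i : ι)
    (b : ι → R) :
    (A.updateCol i b).det = ∑ σ : Equiv.Perm ι,
      (Equiv.Perm.sign σ : R) * (b (σ i) * ∏ k ∈ Finset.univ.erase i, A (σ k) k) := by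
  rw [det_apply']
  refine Finset.sum_congr rfl fun σ _ => ?_
  rw [← Finset.mul_prod_erase _ _ (Finset.mem_univ i), updateCol_self]
  congr 2
  exact Finset.prod_congr rfl fun k hk => updateCol_ne (Finset.ne_of_mem_erase hk)

theorem wirtingerDeriv_det (hM : ∀ i j, DifferentiableAt ℝ (fun y => M y i j) x) :
    wirtingerDeriv c v (fun y => (M y).det) x
      = trace (adjugate (M x) * matrixWirtingerDeriv c v M x) := by
  -- Leibniz rule on each term of the Leibniz formula, then Cramer's rule column by column.
  have hcramer : ∀ i, (adjugate (M x) * matrixWirtingerDeriv c v M x) i i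
      = ((M x).updateCol i fun r => matrixWirtingerDeriv c v M x r i).det := by
    intro i
    rw [← cramer_apply, cramer_eq_adjugate_mulVec]
    rfl
  simp only [trace, diag_apply, hcramer, det_updateCol_eq_sum_prod]
  simp only [det_apply']
  rw [wirtingerDeriv_sum fun σ _ => by fun_prop, Finset.sum_comm]
  refine Finset.sum_congr rfl fun σ _ => ?_
  rw [wirtingerDeriv_const_mul, wirtingerDeriv_prod fun i _ => hM (σ i) i, Finset.mul_sum]
  rfl

theorem differentiableAt_inv_apply (hM : ∀ i j, DifferentiableAt ℝ (fun y => M y i j) x)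
    (hdet : (M x).det ≠ 0) (i j : ι) :
    DifferentiableAt ℝ (fun y => (M y)⁻¹ i j) x := by
  have h : ∀ y, (M y)⁻¹ i j = ((M y).det)⁻¹ * ((M y).updateRow j (Pi.single i 1)).det := by
    intro y
    rw [Matrix.inv_def, Ring.inverse_eq_inv', ← adjugate_apply]
    rfl
  simp only [h]
  refine ((differentiableAt_det hM).inv hdet).mul (differentiableAt_det fun a b => ?_)
  simp only [updateRow_apply]
  split_ifs
  exacts [differentiableAt_const _, hM a b]

theorem matrixWirtingerDeriv_inv (hM : ∀ i j, DifferentiableAt ℝ (fun y => M y i j) x)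
    (hdet : (M x).det ≠ 0) :
    matrixWirtingerDeriv c v (fun y => (M y)⁻¹) x
      = -((M x)⁻¹ * matrixWirtingerDeriv c v M x * (M x)⁻¹) := by
  have hunit : ∀ᶠ y in nhds x, IsUnit (M y).det :=
    ((differentiableAt_det hM).continuousAt.eventually_ne hdet).mono fun _ => IsUnit.mk0 _
  have hprod : matrixWirtingerDeriv c v (fun y => (M y)⁻¹ * M y) x = 0 := by
    ext i j
    have h : (fun y => ((M y)⁻¹ * M y) i j) =ᶠ[nhds x] fun _ => (1 : Matrix ι ι ℂ) i j :=
      hunit.mono fun y hy => by simp only [nonsing_inv_mul _ hy]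
    exact h.wirtingerDeriv_eq.trans (wirtingerDeriv_const _)
  rw [matrixWirtingerDeriv_mul (differentiableAt_inv_apply hM hdet) hM] at hprod
  have hunitx : IsUnit (M x).det := IsUnit.mk0 _ hdet
  calc matrixWirtingerDeriv c v (fun y => (M y)⁻¹) x
      = (matrixWirtingerDeriv c v (fun y => (M y)⁻¹) x * M x) * (M x)⁻¹ := by
        rw [mul_nonsing_inv_cancel_right _ _ hunitx]
    _ = -((M x)⁻¹ * matrixWirtingerDeriv c v M x * (M x)⁻¹) := by
        rw [eq_neg_of_add_eq_zero_left hprod, neg_mul]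

end MatrixWirtingerDeriv

section LogDet

variable {E : Type*} [NormedAddCommGroup E] [NormedSpace ℂ E]
  {c c₁ c₂ : ℂ} {v v₁ v₂ : E} {x : E} {Ω : Set E}
  {ι : Type*} [Fintype ι] [DecidableEq ι] {M : E → Matrix ι ι ℂ} {g : E → ℂ}

theorem trace_inv_mul_matrixWirtingerDeriv_of_det_eq_cexp
    (hM : ∀ i j, DifferentiableAt ℝ (fun y => M y i j) x) (hg : DifferentiableAt ℝ g x)
    (hdet : (fun y => (M y).det) =ᶠ[nhds x] fun y => cexp (g y)) :
    trace ((M x)⁻¹ * matrixWirtingerDeriv c v M x) = wirtingerDeriv c v g x := by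
  have hdetx : (M x).det = cexp (g x) := hdet.eq_of_nhds
  have hne : (M x).det ≠ 0 := hdetx ▸ Complex.exp_ne_zero _
  have hadj : adjugate (M x) = (M x).det • (M x)⁻¹ := by
    rw [Matrix.inv_def, Ring.inverse_eq_inv', smul_smul, mul_inv_cancel₀ hne, one_smul]
  have h := hdet.wirtingerDeriv_eq (c := c) (v := v)
  rw [wirtingerDeriv_det hM, wirtingerDeriv_cexp hg, ← hdetx, hadj, Matrix.smul_mul,
    trace_smul, smul_eq_mul] at h
  exact mul_left_cancel₀ hne h

theorem trace_inv_mul_matrixWirtingerDeriv_matrixWirtingerDeriv_of_det_eq_cexp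
    (hΩ : IsOpen Ω) (hM : ∀ i j, ContDiffOn ℝ ∞ (fun y => M y i j) Ω) (hg : ContDiffOn ℝ ∞ g Ω)
    (hdet : ∀ y ∈ Ω, (M y).det = cexp (g y)) (hx : x ∈ Ω) :
    trace ((M x)⁻¹ * matrixWirtingerDeriv c₁ v₁ (matrixWirtingerDeriv c₂ v₂ M) x)
      = wirtingerDeriv c₁ v₁ (wirtingerDeriv c₂ v₂ g) x
        + trace ((M x)⁻¹ * matrixWirtingerDeriv c₁ v₁ M x * (M x)⁻¹
            * matrixWirtingerDeriv c₂ v₂ M x) := by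
  have hdiff : ∀ y ∈ Ω, ∀ i j, DifferentiableAt ℝ (fun y => M y i j) y := fun y hy i j =>
    (hM i j).differentiableOn (by simp) y hy |>.differentiableAt (hΩ.mem_nhds hy)
  have hne : (M x).det ≠ 0 := hdet x hx ▸ Complex.exp_ne_zero _
  have hD₂M : ∀ i j, DifferentiableAt ℝ (fun y => matrixWirtingerDeriv c₂ v₂ M y i j) x :=
    fun i j => ((hM i j).wirtingerDeriv hΩ).differentiableOn (by simp) x hx
      |>.differentiableAt (hΩ.mem_nhds hx)
  have hMinv := differentiableAt_inv_apply (hdiff x hx) hne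
  have hfirst : Set.EqOn (fun y => trace ((M y)⁻¹ * matrixWirtingerDeriv c₂ v₂ M y))
      (wirtingerDeriv c₂ v₂ g) Ω := fun y hy =>
    trace_inv_mul_matrixWirtingerDeriv_of_det_eq_cexp (hdiff y hy)
      (hg.differentiableOn (by simp) y hy |>.differentiableAt (hΩ.mem_nhds hy))
      (Filter.eventually_of_mem (hΩ.mem_nhds hy) hdet)
  have h := hfirst.wirtingerDeriv hΩ hx (c := c₁) (v := v₁)
  rw [wirtingerDeriv_trace (differentiableAt_mul_apply hMinv hD₂M),
    matrixWirtingerDeriv_mul hMinv hD₂M, matrixWirtingerDeriv_inv (hdiff x hx) hne] at h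
  rw [trace_add, neg_mul, trace_neg] at h
  linear_combination h

end LogDet

theorem sum_sum_smul_apply_eq_trace {ι m k R : Type*} [Fintype ι] [CommSemiring R]
    (N : Matrix ι ι R) (X : ι → ι → Matrix m k R) (p : m) (q : k) :
    (∑ i, ∑ j, N j i • X i j) p q = trace (N * of fun i j => X i j p q) := by
  simp only [Matrix.sum_apply, Matrix.smul_apply, smul_eq_mul, trace, diag_apply, mul_apply,
    of_apply]
  exact Finset.sum_comm

section ComplexCoordinates

variable {n : ℕ} {Ω : Set (Fin n → ℂ)} {u : (Fin n → ℂ) → ℝ} {z : Fin n → ℂ}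

theorem wdz_eq_wirtingerDeriv (f : (Fin n → ℂ) → ℂ) (j : Fin n) :
    wdz f j = wirtingerDeriv (-I) (Pi.single j 1) f := by
  funext z
  rw [wdz, wirtingerDeriv, ← Pi.single_smul, smul_eq_mul, mul_one]
  ring

theorem wdzbar_eq_wirtingerDeriv (f : (Fin n → ℂ) → ℂ) (j : Fin n) :
    wdzbar f j = wirtingerDeriv I (Pi.single j 1) f := by
  funext z
  rw [wdzbar, wirtingerDeriv, ← Pi.single_smul, smul_eq_mul, mul_one]

theorem mwdz_eq_matrixWirtingerDeriv (F : (Fin n → ℂ) → Matrix (Fin n) (Fin n) ℂ) (j : Fin n) :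
    mwdz F j = matrixWirtingerDeriv (-I) (Pi.single j 1) F := by
  funext z
  simp only [mwdz, matrixWirtingerDeriv, wdz_eq_wirtingerDeriv]

theorem mwdzbar_eq_matrixWirtingerDeriv (F : (Fin n → ℂ) → Matrix (Fin n) (Fin n) ℂ)
    (j : Fin n) : mwdzbar F j = matrixWirtingerDeriv I (Pi.single j 1) F := by
  funext z
  simp only [mwdzbar, matrixWirtingerDeriv, wdzbar_eq_wirtingerDeriv]

theorem conj_cplx (u : (Fin n → ℂ) → ℝ) (w : Fin n → ℂ) : starRingEnd ℂ (cplx u w) = cplx u w :=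
  conj_ofReal (u w)

theorem ContDiffOn.cplx (hu : ContDiffOn ℝ ∞ u Ω) : ContDiffOn ℝ ∞ (cplx u) Ω :=
  ofRealCLM.contDiff.comp_contDiffOn hu

theorem contDiffOn_hessA_apply (hΩ : IsOpen Ω) (hu : ContDiffOn ℝ ∞ u Ω) (i j : Fin n) :
    ContDiffOn ℝ ∞ (fun w => hessA u w i j) Ω := by
  simp only [hessA, of_apply, wdz_eq_wirtingerDeriv, wdzbar_eq_wirtingerDeriv]
  exact (hu.cplx.wirtingerDeriv hΩ).wirtingerDeriv hΩ

theorem mconj_hessA (hΩ : IsOpen Ω) (hu : ContDiffOn ℝ ∞ u Ω) (hz : z ∈ Ω) :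
    mconj (hessA u z) = (hessA u z)ᵀ := by
  ext r s
  simp only [mconj, hessA, map_apply, transpose_apply, of_apply, wdz_eq_wirtingerDeriv,
    wdzbar_eq_wirtingerDeriv, conj_wirtingerDeriv, conj_cplx, map_neg, conj_I, neg_neg]
  exact wirtingerDeriv_comm hΩ hu.cplx hz

theorem of_mwdz_mwdzbar_hessA_apply (hΩ : IsOpen Ω) (hu : ContDiffOn ℝ ∞ u Ω) (hz : z ∈ Ω)
    (p q : Fin n) :
    (of fun i j => mwdz (mwdzbar (hessA u) j) i z p q) = mwdz (mwdzbar (hessA u) q) p z := by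
  ext i j
  simp only [mwdz, mwdzbar, hessA, of_apply, wdz_eq_wirtingerDeriv, wdzbar_eq_wirtingerDeriv]
  exact wirtingerDeriv_comm_four hΩ hu.cplx hz

theorem of_mwdzbar_hessB_mul_mul_mwdz_mconj_hessB_apply (hΩ : IsOpen Ω)
    (hu : ContDiffOn ℝ ∞ u Ω) (hz : z ∈ Ω) (p q : Fin n) :
    (of fun i j => (mwdzbar (hessB u) j z * (mconj (hessA u z))⁻¹
        * mwdz (fun w => mconj (hessB u w)) i z) p q)
      = mwdzbar (hessA u) q z * (hessA u z)⁻¹ * mwdz (hessA u) p z := by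
  ext i j
  have hB : ∀ r, mwdzbar (hessB u) j z p r = mwdz (hessA u) p z r j := fun r => by
    simp only [mwdz, mwdzbar, hessA, hessB, of_apply, wdz_eq_wirtingerDeriv,
      wdzbar_eq_wirtingerDeriv]
    exact wirtingerDeriv_comm_three hΩ hu.cplx hz
  have hBbar : ∀ s, mwdz (fun w => mconj (hessB u w)) i z s q = mwdzbar (hessA u) q z i s :=
    fun s => by
    simp only [mwdz, mwdzbar, mconj, hessA, hessB, map_apply, of_apply,
      wdz_eq_wirtingerDeriv, wdzbar_eq_wirtingerDeriv, conj_wirtingerDeriv, conj_cplx, map_neg,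
      conj_I, neg_neg]
    exact (wirtingerDeriv_comm_three hΩ hu.cplx hz).symm
  rw [of_apply, mconj_hessA hΩ hu hz, ← transpose_nonsing_inv]
  simp only [mul_apply, transpose_apply, hB, hBbar, Finset.sum_mul]
  rw [Finset.sum_comm]
  exact Finset.sum_congr rfl fun r _ => Finset.sum_congr rfl fun s _ => by ring

theorem trace_hessA_inv_mul_mwdz_mwdzbar_hessA (hΩ : IsOpen Ω) (hu : ContDiffOn ℝ ∞ u Ω)
    (hKE : ∀ z ∈ Ω, (hessA u z).det = (Real.exp ((n + 1) * u z) : ℂ)) (hz : z ∈ Ω)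
    (p q : Fin n) :
    trace ((hessA u z)⁻¹ * mwdz (mwdzbar (hessA u) q) p z)
      = ((n : ℂ) + 1) * hessA u z p q
        + trace ((hessA u z)⁻¹ * mwdz (hessA u) p z * (hessA u z)⁻¹ * mwdzbar (hessA u) q z) := by
  have hdet : ∀ w ∈ Ω, (hessA u w).det = cexp (((n : ℂ) + 1) * cplx u w) := fun w hw => by
    rw [hKE w hw, ofReal_exp]
    push_cast
    rfl
  have hconst : wirtingerDeriv I (Pi.single q 1) (fun w => ((n : ℂ) + 1) * cplx u w)
      = fun w => ((n : ℂ) + 1) * wirtingerDeriv I (Pi.single q 1) (cplx u) w :=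
    funext fun _ => wirtingerDeriv_const_mul _
  simp only [mwdz_eq_matrixWirtingerDeriv, mwdzbar_eq_matrixWirtingerDeriv]
  rw [trace_inv_mul_matrixWirtingerDeriv_matrixWirtingerDeriv_of_det_eq_cexp hΩ
    (contDiffOn_hessA_apply hΩ hu) (contDiffOn_const.mul hu.cplx) hdet hz, hconst,
    wirtingerDeriv_const_mul]
  simp only [hessA, of_apply, wdz_eq_wirtingerDeriv, wdzbar_eq_wirtingerDeriv]

end ComplexCoordinates

theorem laplacian_A_eq_BB_general (n : ℕ) (Ω : Set (Fin n → ℂ)) (hΩ : IsOpen Ω)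
    (u : (Fin n → ℂ) → ℝ) (hu : ContDiffOn ℝ (⊤ : ℕ∞) u Ω)
    (hKE : ∀ z ∈ Ω, (hessA u z).det = (Real.exp ((n + 1) * u z) : ℂ)) :
    ∀ z ∈ Ω,
      ∑ i, ∑ j, uInv u z i j • mwdz (mwdzbar (hessA u) j) i z
        = (∑ i, ∑ j, uInv u z i j •
            (mwdzbar (hessB u) j z * (mconj (hessA u z))⁻¹ *
              mwdz (fun w => mconj (hessB u w)) i z))
          + ((n : ℂ) + 1) • hessA u z := by
  intro z hz
  ext p q
  simp only [uInv, Matrix.add_apply, Matrix.smul_apply, smul_eq_mul, sum_sum_smul_apply_eq_trace,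
    of_mwdz_mwdzbar_hessA_apply hΩ hu hz, of_mwdzbar_hessB_mul_mul_mwdz_mconj_hessB_apply hΩ hu hz,
    trace_hessA_inv_mul_mwdz_mwdzbar_hessA hΩ hu hKE hz]
  rw [add_comm, Matrix.mul_assoc (_ * _), trace_mul_comm, Matrix.mul_assoc,
    Matrix.mul_assoc (mwdzbar _ _ _)]

theorem laplacian_A_eq_BB (n : ℕ) (Ω : Set (Fin n → ℂ)) (hΩ : IsOpen Ω)
    (u : (Fin n → ℂ) → ℝ) (hu : ContDiffOn ℝ (⊤ : ℕ∞) u Ω)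
    (hpsh : ∀ z ∈ Ω, (hessA u z).PosDef)
    (hKE : ∀ z ∈ Ω, (hessA u z).det = (Real.exp ((n + 1) * u z) : ℂ)) :
    ∀ z ∈ Ω,
      ∑ i, ∑ j, uInv u z i j • mwdz (mwdzbar (hessA u) j) i z
        = (∑ i, ∑ j, uInv u z i j •
            (mwdzbar (hessB u) j z * (mconj (hessA u z))⁻¹ *
              mwdz (fun w => mconj (hessB u w)) i z))
          + ((n : ℂ) + 1) • hessA u z :=
  laplacian_A_eq_BB_general n Ω hΩ u hu hKE
end
end
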